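/- Let W₁ : ℝ → ℝ be defined by W₁(y) = e^{−y²/4} − (y/2)∫_y^∞ e^{−ζ²/4} dζ, and define G(y) = −W₁(y)/(2W₁′(y)). Then G is well defined and smooth on ℝ (since W₁′ < 0 everywhere), strictly decreasing on ℝ, with G(0) = 1/√π, lim_{y→∞} G(y) = 0, and lim_{y→−∞} G(y) = +∞. Consequently, for every r > 0 there exists a unique σ ∈ ℝ with G(σ) = r; moreover σ > 0 if 0 < r < 1/√π, σ = 0 if r = 1/√π, and σ < 0 if r > 1/√π. -/

import Mathlib

set_option autoImplicit false

open Set Filter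

/-- The (extended) function `W₁(y) = e^{-y²/4} - (y/2) ∫_y^∞ e^{-ζ²/4} dζ`. -/
noncomputable def W1ext (y : ℝ) : ℝ :=
  Real.exp (-y ^ 2 / 4) - y / 2 * ∫ ζ in Ioi y, Real.exp (-ζ ^ 2 / 4)

/-- The ratio `G = -W₁/(2W₁')`. -/
noncomputable def G17 (y : ℝ) : ℝ :=
  -W1ext y / (2 * deriv W1ext y)

open MeasureTheory

noncomputable def fg (ζ : ℝ) : ℝ := Real.exp (-ζ ^ 2 / 4)
noncomputable def Ig (y : ℝ) : ℝ := ∫ ζ in Ioi y, fg ζ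

lemma fg_pos (y : ℝ) : 0 < fg y := Real.exp_pos _
lemma fg_le_one (y : ℝ) : fg y ≤ 1 := by
  rw [fg, ← Real.exp_zero]
  apply Real.exp_le_exp.2
  nlinarith [sq_nonneg y]

lemma fg_smooth : ContDiff ℝ (⊤ : ℕ∞) fg := by
  apply Real.contDiff_exp.comp
  exact (contDiff_id.pow 2).neg.div_const 4

lemma fg_cont : Continuous fg := fg_smooth.continuous

lemma fg_integrable : Integrable fg := by
  have h : fg = fun x : ℝ => Real.exp (-(1/4) * x ^ 2) := by
    funext x; simp only [fg]; rw [Real.exp_eq_exp]; ring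
  rw [h]; exact integrable_exp_neg_mul_sq (by norm_num)

lemma hasDerivAt_fg (y : ℝ) : HasDerivAt fg (-(y/2) * fg y) y := by
  have h1 : HasDerivAt (fun y : ℝ => -y ^ 2 / 4) (-(y/2)) y := by
    have := ((hasDerivAt_pow 2 y).neg).div_const 4
    exact this.congr_deriv (by ring)
  have := (Real.hasDerivAt_exp (-y^2/4)).comp y h1
  exact this.congr_deriv (by unfold fg; ring)

lemma Ig_pos (y : ℝ) : 0 < Ig y := by
  rw [Ig, setIntegral_pos_iff_support_of_nonneg_ae]
  · have : (Function.support fg) ∩ Ioi y = Ioi y := by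
      rw [inter_eq_right]; intro x _; exact (fg_pos x).ne'
    rw [this]
    simp [Real.volume_Ioi]
  · filter_upwards with x using (fg_pos x).le
  · exact fg_integrable.integrableOn

lemma Ig_eq (y : ℝ) : Ig y = Ig 0 - ∫ t in (0:ℝ)..y, fg t := by
  have h := intervalIntegral.integral_Iic_sub_Iic (fg_integrable.integrableOn) (fg_integrable.integrableOn) (a := 0) (b := y) (μ := volume)
  have h0 : (∫ t in Iic (0:ℝ), fg t) + Ig 0 = ∫ t, fg t :=
    intervalIntegral.integral_Iic_add_Ioi fg_integrable.integrableOn fg_integrable.integrableOn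
  have hy : (∫ t in Iic y, fg t) + Ig y = ∫ t, fg t :=
    intervalIntegral.integral_Iic_add_Ioi fg_integrable.integrableOn fg_integrable.integrableOn
  linarith [h]

lemma hasDerivAt_Ig (y : ℝ) : HasDerivAt Ig (-fg y) y := by
  have h : HasDerivAt (fun u => ∫ t in (0:ℝ)..u, fg t) (fg y) y :=
    (fg_cont.integral_hasStrictDerivAt 0 y).hasDerivAt
  have h2 := (hasDerivAt_const y (Ig 0)).sub h
  simp only [zero_sub] at h2
  exact h2.congr_of_eventuallyEq (Filter.Eventually.of_forall fun x => Ig_eq x)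

lemma hasDerivAt_W1 (y : ℝ) : HasDerivAt W1ext (-(Ig y) / 2) y := by
  have h1 : HasDerivAt (fun y : ℝ => Real.exp (-y ^ 2 / 4)) (-(y/2) * fg y) y := hasDerivAt_fg y
  have h2 : HasDerivAt (fun y : ℝ => y / 2 * Ig y) (1/2 * Ig y + y/2 * (-fg y)) y :=
    ((hasDerivAt_id y).div_const 2).mul (hasDerivAt_Ig y)
  have h3 := h1.sub h2
  have he : W1ext = fun y => Real.exp (-y ^ 2 / 4) - y / 2 * Ig y := rfl
  rw [he]
  exact h3.congr_deriv (by ring)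

lemma deriv_W1 : deriv W1ext = fun y => -(Ig y) / 2 :=
  funext fun y => (hasDerivAt_W1 y).deriv

lemma W1_eq (y : ℝ) : W1ext y = fg y - y / 2 * Ig y := rfl

lemma G17_eq : G17 = fun y => W1ext y / Ig y := by
  funext y
  rw [G17, deriv_W1]
  rw [show 2 * (-Ig y / 2) = -Ig y by ring, neg_div_neg_eq]

lemma Ig_zero : Ig 0 = Real.sqrt Real.pi := by
  have h : Ig 0 = ∫ x in Ioi (0:ℝ), Real.exp (-(1/4) * x ^ 2) := by
    rw [Ig]
    congr 1
    funext x
    simp only [fg]; rw [show -x^2/4 = -(1/4)*x^2 by ring]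
  rw [h, integral_gaussian_Ioi]
  rw [show Real.pi / (1/4) = 4 * Real.pi by ring]
  rw [show (4:ℝ) * Real.pi = 2^2 * Real.pi by norm_num]
  rw [Real.sqrt_mul (by positivity), Real.sqrt_sq (by norm_num)]
  ring

lemma int_total : ∫ ζ, fg ζ = 2 * Real.sqrt Real.pi := by
  have h : ∫ ζ, fg ζ = ∫ x, Real.exp (-(1/4) * x ^ 2) := by
    congr 1; funext x; simp only [fg]; rw [show -x^2/4 = -(1/4)*x^2 by ring]
  rw [h, integral_gaussian]
  rw [show Real.pi / (1/4) = 2^2 * Real.pi by ring]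
  rw [Real.sqrt_mul (by positivity), Real.sqrt_sq (by norm_num)]

lemma tendsto_Ig_top : Tendsto Ig atTop (nhds 0) := by
  have h := tendsto_setIntegral_of_antitone (μ := volume) (f := fg)
    (s := fun y : ℝ => Ioi y) (fun y => measurableSet_Ioi)
    (fun a b hab => Ioi_subset_Ioi hab) ⟨0, fg_integrable.integrableOn⟩
  have he : ⋂ y : ℝ, Ioi y = (∅ : Set ℝ) := by
    ext x
    simp only [mem_iInter, mem_Ioi, mem_empty_iff_false, iff_false, not_forall, not_lt]
    exact ⟨x, le_rfl⟩
  rw [he] at h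
  simp at h; exact h

lemma tendsto_Ig_bot : Tendsto Ig atBot (nhds (2 * Real.sqrt Real.pi)) := by
  have h := tendsto_setIntegral_of_monotone (μ := volume) (f := fg)
    (s := fun y : ℝ => Ioi (-y)) (fun y => measurableSet_Ioi)
    (fun a b hab => Ioi_subset_Ioi (neg_le_neg hab)) ?_
  · have he : ⋃ y : ℝ, Ioi (-y) = (univ : Set ℝ) := by
      ext x
      simp only [mem_iUnion, mem_Ioi, mem_univ, iff_true]
      exact ⟨-x + 1, by linarith⟩
    rw [he] at h
    have h2 : Tendsto (fun y : ℝ => Ig (-y)) atTop (nhds (2 * Real.sqrt Real.pi)) := by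
      simpa [Ig, int_total, Measure.restrict_univ] using h
    have h3 := h2.comp tendsto_neg_atBot_atTop
    have h4 : ((fun y : ℝ => Ig (-y)) ∘ Neg.neg) = Ig := by funext y; simp
    rwa [h4] at h3
  · rw [show ⋃ y : ℝ, Ioi (-y) = (univ : Set ℝ) from by
      ext x
      simp only [mem_iUnion, mem_Ioi, mem_univ, iff_true]
      exact ⟨-x + 1, by linarith⟩]
    simpa using fg_integrable

lemma tendsto_fg_top : Tendsto fg atTop (nhds 0) := by
  have h0 : Tendsto (fun ζ : ℝ => ζ^2) atTop atTop := tendsto_pow_atTop (by norm_num)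
  have h1 : Tendsto (fun ζ : ℝ => -ζ^2) atTop atBot := by
    simpa using tendsto_neg_atTop_atBot.comp h0
  have h2 : Tendsto (fun ζ : ℝ => -ζ^2/4) atTop atBot := h1.atBot_div_const (by norm_num)
  exact Real.tendsto_exp_atBot.comp h2

lemma moment (y : ℝ) : ∫ ζ in Ioi y, ζ * fg ζ = 2 * fg y := by
  have hd : ∀ x ∈ Ici y, HasDerivAt (fun ζ : ℝ => -2 * fg ζ) (x * fg x) x := by
    intro x _
    have := (hasDerivAt_fg x).const_mul (-2 : ℝ)
    exact this.congr_deriv (by ring)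
  have hint : IntegrableOn (fun ζ : ℝ => ζ * fg ζ) (Ioi y) := by
    have h : (fun ζ : ℝ => ζ * fg ζ) = fun x : ℝ => x * Real.exp (-(1/4) * x ^ 2) := by
      funext x; simp only [fg]; rw [show -x^2/4 = -(1/4)*x^2 by ring]
    rw [h]
    exact (integrable_mul_exp_neg_mul_sq (by norm_num)).integrableOn
  have hlim : Tendsto (fun ζ : ℝ => -2 * fg ζ) atTop (nhds 0) := by
    simpa using tendsto_fg_top.const_mul (-2 : ℝ)
  have := MeasureTheory.integral_Ioi_of_hasDerivAt_of_tendsto' hd hint hlim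
  rw [this]; ring

noncomputable def Sc (z : ℂ) : ℂ :=
  ∑' n : ℕ, ((-1/4 : ℂ) ^ n / (n.factorial * (2 * n + 1))) * z ^ (2 * n + 1)

lemma Sc_zero : Sc 0 = 0 := by
  rw [Sc]
  have : ∀ n : ℕ, ((-1/4 : ℂ) ^ n / (n.factorial * (2 * n + 1))) * (0:ℂ) ^ (2 * n + 1) = 0 := by
    intro n
    rw [zero_pow (Nat.succ_ne_zero _), mul_zero]
  simp only [this, tsum_zero]

lemma hasDerivAt_Sc (z : ℂ) : HasDerivAt Sc (Complex.exp (-z ^ 2 / 4)) z := by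
  have main : ∀ R : ℝ, 0 < R → ‖z‖ < R →
      HasDerivAt Sc (∑' n : ℕ, ((-1/4 : ℂ) ^ n / (n.factorial : ℂ)) * z ^ (2 * n)) z := by
    intro R hRpos hz
    apply hasDerivAt_tsum_of_isPreconnected
      (u := fun n : ℕ => (R ^ 2 / 4) ^ n / n.factorial)
      (Real.summable_pow_div_factorial _) Metric.isOpen_ball
      (convex_ball (0:ℂ) R).isPreconnected
      (g' := fun n w => ((-1/4 : ℂ) ^ n / (n.factorial : ℂ)) * w ^ (2 * n))
      (y₀ := 0)
    · intro n w _
      have h := (hasDerivAt_pow (2 * n + 1) w).const_mul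
        ((-1/4 : ℂ) ^ n / (n.factorial * (2 * n + 1)))
      refine h.congr_deriv ?_
      rw [Nat.add_sub_cancel]
      have hne : ((2 * n + 1 : ℕ) : ℂ) ≠ 0 := Nat.cast_ne_zero.mpr (Nat.succ_ne_zero _)
      have hfac : ((n.factorial : ℂ)) ≠ 0 := Nat.cast_ne_zero.2 n.factorial_ne_zero
      push_cast at hne ⊢
      field_simp
    · intro n w hw
      have hw' : ‖w‖ ≤ R := le_of_lt (by simpa using hw)
      calc ‖((-1/4 : ℂ) ^ n / (n.factorial : ℂ)) * w ^ (2 * n)‖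
          = (1/4) ^ n / (n.factorial : ℝ) * ‖w‖ ^ (2 * n) := by
            rw [norm_mul, norm_div, norm_pow, norm_pow]
            norm_num
        _ ≤ (1/4) ^ n / (n.factorial : ℝ) * R ^ (2 * n) := by
            apply mul_le_mul_of_nonneg_left (pow_le_pow_left₀ (norm_nonneg w) hw' _)
            positivity
        _ = (R ^ 2 / 4) ^ n / n.factorial := by
            rw [div_pow, div_pow, pow_mul]
            ring
    · exact Metric.mem_ball_self hRpos
    · apply Summable.congr summable_zero
      intro n
      rw [zero_pow (Nat.succ_ne_zero _), mul_zero]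
    · simpa using hz
  have key := main (‖z‖ + 1) (by positivity) (by linarith)
  convert key using 1
  rw [Complex.exp_eq_exp_ℂ, NormedSpace.exp_eq_tsum_div]
  show (∑' n : ℕ, (-z^2/4) ^ n / (n.factorial : ℂ)) = _
  exact tsum_congr fun n => by
    rw [show -z^2/4 = (-1/4 : ℂ) * z^2 by ring, mul_pow, ← pow_mul]
    ring

lemma hasDerivAt_Sre (y : ℝ) : HasDerivAt (fun y : ℝ => (Sc y).re) (fg y) y := by
  have h1 : HasDerivAt (fun y : ℝ => Sc y) (Complex.exp (-(y:ℂ) ^ 2 / 4)) y :=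
    (hasDerivAt_Sc y).comp_ofReal
  have h2 := (Complex.reCLM.hasFDerivAt.comp_hasDerivAt y h1)
  have h3 : (Complex.reCLM (Complex.exp (-(y:ℂ) ^ 2 / 4))) = fg y := by
    rw [show (-(y:ℂ) ^ 2 / 4) = ((-y^2/4 : ℝ) : ℂ) by push_cast; ring]
    rw [← Complex.ofReal_exp]
    rfl
  rw [h3] at h2
  exact h2

lemma Ig_repr : Ig = fun y : ℝ => Ig 0 - (Sc y).re := by
  have hD : ∀ y : ℝ, HasDerivAt (fun y : ℝ => Ig y - (Ig 0 - (Sc y).re)) 0 y := by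
    intro y
    have h := (hasDerivAt_Ig y).sub ((hasDerivAt_const y (Ig 0)).sub (hasDerivAt_Sre y))
    exact h.congr_deriv (by ring)
  have hconst : ∀ y : ℝ, Ig y - (Ig 0 - (Sc y).re) = Ig 0 - (Ig 0 - (Sc (0:ℝ)).re) := by
    intro y
    apply is_const_of_deriv_eq_zero (fun x => (hD x).differentiableAt) (fun x => (hD x).deriv)
  funext y
  have := hconst y
  rw [Complex.ofReal_zero, Sc_zero] at this
  simp at this
  linarith [this]

lemma Ig_analytic : ∀ y : ℝ, AnalyticAt ℝ Ig y := by
  intro y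
  rw [Ig_repr]
  apply AnalyticAt.sub analyticAt_const
  have h1 : AnalyticAt ℝ (fun z : ℂ => (z.re)) ((Sc ∘ Complex.ofReal) y) := Complex.reCLM.analyticAt _
  have hdiff : Differentiable ℂ Sc := fun z => (hasDerivAt_Sc z).differentiableAt
  have h2 : AnalyticAt ℝ Sc ((y:ℝ) : ℂ) := (hdiff.analyticAt _).restrictScalars
  have h3 : AnalyticAt ℝ (fun y : ℝ => ((y:ℝ) : ℂ)) y := Complex.ofRealCLM.analyticAt y
  exact h1.comp (h2.comp h3)

lemma fg_analytic : ∀ y : ℝ, AnalyticAt ℝ fg y := by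
  intro y
  apply analyticAt_rexp.comp
  apply AnalyticAt.div
  · exact (analyticAt_id.pow 2).neg
  · exact analyticAt_const
  · norm_num

lemma G17_smooth : ContDiff ℝ (⊤ : ℕ∞) G17 := by
  rw [G17_eq]
  apply AnalyticOnNhd.contDiff
  intro y _
  have hW : AnalyticAt ℝ W1ext y := by
    have h : W1ext = fun y => fg y - y / 2 * Ig y := rfl
    rw [h]
    exact (fg_analytic y).sub
      ((analyticAt_id.div analyticAt_const (by norm_num)).mul (Ig_analytic y))
  exact hW.div (Ig_analytic y) (Ig_pos y).ne'

noncomputable def sq8 (y : ℝ) : ℝ := Real.sqrt (y ^ 2 + 8)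

lemma sq8_pos (y : ℝ) : 0 < sq8 y := Real.sqrt_pos.2 (by positivity)
lemma sq8_sq (y : ℝ) : sq8 y ^ 2 = y ^ 2 + 8 := Real.sq_sqrt (by positivity)
lemma lt_sq8 (y : ℝ) : y < sq8 y := by
  nlinarith [sq8_pos y, sq8_sq y, abs_nonneg y, sq_abs y, le_abs_self y,
    sq_nonneg (sq8 y - |y|), sq_nonneg (sq8 y + |y|)]
lemma neg_lt_sq8 (y : ℝ) : -y < sq8 y := by
  have := lt_sq8 (-y); simpa [sq8, neg_pow] using this

lemma ys_lt (y : ℝ) : y * sq8 y < y ^ 2 + 4 := by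
  have h1 : sq8 y ≠ y := fun h => by have h2 := sq8_sq y; rw [h] at h2; nlinarith
  have h2 : 0 < (sq8 y - y) ^ 2 := by
    have := sub_ne_zero.2 h1
    positivity
  nlinarith [sq8_sq y]

noncomputable def gk (y : ℝ) : ℝ := (sq8 y - y) / 2

lemma gk_pos (y : ℝ) : 0 < gk y := by have := lt_sq8 y; rw [gk]; linarith

lemma hasDerivAt_gk (y : ℝ) : HasDerivAt gk ((y / sq8 y - 1) / 2) y := by
  have h1 : HasDerivAt (fun y : ℝ => y ^ 2 + 8) (2 * y) y := by
    simpa using (hasDerivAt_pow 2 y).add_const 8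
  have h2 : HasDerivAt (fun y : ℝ => Real.sqrt (y ^ 2 + 8))
      (1 / (2 * Real.sqrt (y ^ 2 + 8)) * (2 * y)) y :=
    (Real.hasDerivAt_sqrt (by positivity)).comp y h1
  have h3 := (h2.sub (hasDerivAt_id y)).div_const 2
  have he : gk = fun y => (Real.sqrt (y ^ 2 + 8) - y) / 2 := rfl
  rw [he]
  refine h3.congr_deriv ?_
  have hs := sq8_pos y
  rw [show Real.sqrt (y ^ 2 + 8) = sq8 y from rfl]
  field_simp

noncomputable def Fk (y : ℝ) : ℝ := Ig y - gk y * fg y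

lemma hasDerivAt_Fk (y : ℝ) :
    HasDerivAt Fk (-fg y - ((y / sq8 y - 1) / 2 * fg y + gk y * (-(y / 2) * fg y))) y :=
  (hasDerivAt_Ig y).sub ((hasDerivAt_gk y).mul (hasDerivAt_fg y))

lemma Fk_deriv_neg (y : ℝ) :
    -fg y - ((y / sq8 y - 1) / 2 * fg y + gk y * (-(y / 2) * fg y)) < 0 := by
  set s := sq8 y with hs
  have hspos : 0 < s := sq8_pos y
  have hs2 : s ^ 2 = y ^ 2 + 8 := sq8_sq y
  have hys : y * s < y ^ 2 + 4 := ys_lt y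
  have hgk : gk y = (s - y) / 2 := rfl
  rw [hgk]
  have hfg := fg_pos y
  have key : s * (y ^ 2 + 2) - (y ^ 3 + 6 * y) > 0 := by
    rcases le_or_gt y 0 with hy | hy
    · nlinarith
    · nlinarith [sq_nonneg (s * (y^2+2) - (y^3 + 6*y)), mul_pos hy hspos]
  have hexpand : -fg y - ((y / s - 1) / 2 * fg y + (s - y) / 2 * (-(y / 2) * fg y))
      = fg y / (4 * s) * (y * s ^ 2 - y ^ 2 * s - 2 * s - 2 * y) := by
    field_simp
    ring
  rw [hexpand, hs2]
  apply mul_neg_of_pos_of_neg (by positivity)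
  nlinarith

lemma gk_mul (y : ℝ) : gk y * (sq8 y + y) = 4 := by
  have := sq8_sq y
  rw [gk]
  nlinarith

lemma tendsto_Fk_top : Tendsto Fk atTop (nhds 0) := by
  have h1 : Tendsto (fun y : ℝ => gk y * fg y) atTop (nhds 0) := by
    apply squeeze_zero' (g := fun y : ℝ => 4 / y)
    · filter_upwards with y using le_of_lt (mul_pos (gk_pos y) (fg_pos y))
    · filter_upwards [eventually_ge_atTop (1:ℝ)] with y hy
      have hy0 : 0 < y := by linarith
      have hgs : gk y ≤ 4 / y := by
        rw [le_div_iff₀ hy0]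
        have h2 : y ≤ sq8 y + y := by have := sq8_pos y; linarith
        calc gk y * y ≤ gk y * (sq8 y + y) :=
              mul_le_mul_of_nonneg_left h2 (gk_pos y).le
          _ = 4 := gk_mul y
      calc gk y * fg y ≤ gk y * 1 := by
            apply mul_le_mul_of_nonneg_left (fg_le_one y) (gk_pos y).le
        _ = gk y := mul_one _
        _ ≤ 4 / y := hgs
    · have h3 : Tendsto (fun y : ℝ => y⁻¹) atTop (nhds 0) := tendsto_inv_atTop_zero
      have h4 := h3.const_mul (4:ℝ)
      simpa [div_eq_mul_inv] using h4
  have h := tendsto_Ig_top.sub h1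
  rw [sub_zero] at h; exact h

lemma Fk_pos (y : ℝ) : 0 < Fk y := by
  have hanti : StrictAnti Fk := by
    apply strictAnti_of_deriv_neg
    intro x
    rw [(hasDerivAt_Fk x).deriv]
    exact Fk_deriv_neg x
  have hnonneg : ∀ z : ℝ, 0 ≤ Fk z := by
    intro z
    apply le_of_tendsto tendsto_Fk_top
    filter_upwards [eventually_ge_atTop z] with x hx
    exact hanti.antitone hx
  calc 0 ≤ Fk (y + 1) := hnonneg _
    _ < Fk y := hanti (by linarith)

lemma komatu (y : ℝ) : gk y * fg y < Ig y := by
  have := Fk_pos y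
  rw [Fk] at this
  linarith

lemma key_ineq (y : ℝ) : 2 * fg y * W1ext y < Ig y ^ 2 := by
  have h1 : 0 < Ig y - gk y * fg y := by linarith [komatu y]
  have h2 : 0 < Ig y + (gk y + y) * fg y := by
    have hgy : 0 < gk y + y := by
      have := neg_lt_sq8 y; rw [gk]; linarith
    have := mul_pos hgy (fg_pos y)
    linarith [Ig_pos y]
  have h3 := mul_pos h1 h2
  have h4 : gk y ^ 2 + y * gk y = 2 := by
    have := sq8_sq y
    rw [gk]
    nlinarith
  rw [W1_eq]
  nlinarith [fg_pos y, sq_nonneg (fg y)]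

lemma hasDerivAt_G17 (y : ℝ) :
    HasDerivAt G17 ((-Ig y / 2 * Ig y - W1ext y * -fg y) / Ig y ^ 2) y := by
  rw [G17_eq]
  exact (hasDerivAt_W1 y).div (hasDerivAt_Ig y) (Ig_pos y).ne'

lemma G17_strictAnti : StrictAnti G17 := by
  apply strictAnti_of_deriv_neg
  intro y
  rw [(hasDerivAt_G17 y).deriv]
  apply div_neg_of_neg_of_pos
  · nlinarith [key_ineq y]
  · exact pow_pos (Ig_pos y) 2

lemma G17_zero : G17 0 = 1 / Real.sqrt Real.pi := by
  rw [G17_eq]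
  show W1ext 0 / Ig 0 = _
  rw [W1_eq, Ig_zero]
  simp [fg, Real.exp_zero]

lemma momentle {y : ℝ} (hy : 0 < y) : y * Ig y ≤ 2 * fg y := by
  have h1 : y * Ig y = ∫ ζ in Ioi y, y * fg ζ := by
    rw [Ig, MeasureTheory.integral_const_mul]
  rw [h1, ← moment y]
  apply setIntegral_mono_on
  · exact (fg_integrable.const_mul y).integrableOn
  · have h : (fun ζ : ℝ => ζ * fg ζ) = fun x : ℝ => x * Real.exp (-(1/4) * x ^ 2) := by
      funext x; simp only [fg]; rw [show -x^2/4 = -(1/4)*x^2 by ring]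
    rw [h]
    exact (integrable_mul_exp_neg_mul_sq (by norm_num)).integrableOn
  · exact measurableSet_Ioi
  · intro x hx
    exact mul_le_mul_of_nonneg_right (le_of_lt hx) (fg_pos x).le

lemma G17_div_eq (y : ℝ) : G17 y = fg y / Ig y - y / 2 := by
  rw [G17_eq]
  show W1ext y / Ig y = _
  rw [W1_eq]
  have hI := (Ig_pos y).ne'
  field_simp

lemma tendsto_G17_top : Tendsto G17 atTop (nhds 0) := by
  refine tendsto_of_tendsto_of_tendsto_of_le_of_le' (g := fun _ : ℝ => (0:ℝ))
    (h := fun y : ℝ => 8 / y) tendsto_const_nhds ?_ ?_ ?_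
  · have h3 : Tendsto (fun y : ℝ => y⁻¹) atTop (nhds 0) := tendsto_inv_atTop_zero
    have h4 := h3.const_mul (8:ℝ)
    simpa [div_eq_mul_inv] using h4
  · filter_upwards [eventually_gt_atTop (0:ℝ)] with y hy
    rw [G17_div_eq]
    have h1 : y / 2 ≤ fg y / Ig y := by
      rw [le_div_iff₀ (Ig_pos y)]
      have := momentle hy
      nlinarith
    linarith
  · filter_upwards [eventually_gt_atTop (0:ℝ)] with y hy
    rw [G17_div_eq]
    set s := sq8 y with hsdef
    have hspos : 0 < s := sq8_pos y
    have hs2 : s ^ 2 = y ^ 2 + 8 := sq8_sq y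
    have hys : y * s < y ^ 2 + 4 := ys_lt y
    have hsy : y < s := lt_sq8 y
    have hkom := komatu y
    have hgk : gk y = (s - y) / 2 := rfl
    have h5 : fg y / Ig y < 2 / (s - y) := by
      rw [div_lt_div_iff₀ (Ig_pos y) (by linarith)]
      rw [hgk] at hkom
      nlinarith [Ig_pos y, fg_pos y]
    have h6 : 2 / (s - y) = (s + y) / 4 := by
      rw [div_eq_div_iff (by linarith) (by norm_num)]
      nlinarith
    have h7 : (s - y) / 4 ≤ 8 / y + y / 2 - y / 2 := by
      rw [show (8:ℝ) / y + y / 2 - y / 2 = 8 / y by ring, le_div_iff₀ hy]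
      nlinarith
    rw [h6] at h5
    linarith

lemma tendsto_fg_bot : Tendsto fg atBot (nhds 0) := by
  have h0 : Tendsto (fun ζ : ℝ => ζ^2) atTop atTop := tendsto_pow_atTop (by norm_num)
  have h0' : Tendsto (fun ζ : ℝ => ζ^2) atBot atTop := by
    have h := h0.comp tendsto_neg_atBot_atTop
    simpa [Function.comp_def, neg_sq] using h
  have h1 : Tendsto (fun ζ : ℝ => -ζ^2) atBot atBot := by
    have h := tendsto_neg_atTop_atBot.comp h0'
    simpa [Function.comp_def] using h
  have h2 : Tendsto (fun ζ : ℝ => -ζ^2/4) atBot atBot := h1.atBot_div_const (by norm_num)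
  exact Real.tendsto_exp_atBot.comp h2

lemma tendsto_G17_bot : Tendsto G17 atBot atTop := by
  have h1 : Tendsto (fun y : ℝ => fg y / Ig y) atBot (nhds 0) := by
    have h := tendsto_fg_bot.div tendsto_Ig_bot
      (by positivity : (2 : ℝ) * Real.sqrt Real.pi ≠ 0)
    rw [zero_div] at h; exact h
  have h2 : Tendsto (fun y : ℝ => -(y / 2)) atBot atTop := by
    have := tendsto_neg_atBot_atTop.atTop_div_const (by norm_num : (0:ℝ) < 2)
    simpa [neg_div] using this
  have h3 := h1.add_atTop h2
  apply h3.congr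
  intro y
  rw [G17_div_eq]
  ring

/-- **Properties of `G = -W₁/(2W₁')` and the shooting equation.**
`W₁' < 0` everywhere, so `G` is well defined and smooth; `G` is strictly decreasing,
`G(0) = 1/√Real.pi`, `G → 0` at `+∞`, `G → +∞` at `-∞`; hence for every `r > 0` there is a
unique `σ` with `G(σ) = r`, and `σ > 0 ↔ r < 1/√Real.pi`, `σ = 0 ↔ r = 1/√Real.pi`,
`σ < 0 ↔ r > 1/√Real.pi`. -/
theorem G17_properties :
    (∀ y : ℝ, deriv W1ext y < 0) ∧
    ContDiff ℝ (⊤ : ℕ∞) G17 ∧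
    StrictAnti G17 ∧
    G17 0 = 1 / Real.sqrt Real.pi ∧
    Tendsto G17 atTop (nhds 0) ∧
    Tendsto G17 atBot atTop ∧
    (∀ r : ℝ, 0 < r → ∃! σ : ℝ, G17 σ = r) ∧
    (∀ r : ℝ, 0 < r → ∀ σ : ℝ, G17 σ = r →
      ((0 < σ ↔ r < 1 / Real.sqrt Real.pi) ∧ (σ = 0 ↔ r = 1 / Real.sqrt Real.pi) ∧
        (σ < 0 ↔ 1 / Real.sqrt Real.pi < r))) := by
  refine ⟨?_, G17_smooth, G17_strictAnti, G17_zero, tendsto_G17_top, tendsto_G17_bot, ?_, ?_⟩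
  · intro y
    rw [deriv_W1]
    have := Ig_pos y
    simp only
    linarith
  · intro r hr
    obtain ⟨a, ha⟩ := (tendsto_G17_bot.eventually_gt_atTop r).exists
    obtain ⟨b, hb⟩ := (tendsto_G17_top.eventually (Iio_mem_nhds hr)).exists
    have hab : a ≤ b := by
      by_contra hab
      push_neg at hab
      have := G17_strictAnti hab
      linarith
    have hmem : r ∈ Icc (G17 b) (G17 a) := ⟨hb.le, ha.le⟩
    obtain ⟨σ, _, hσ⟩ := intermediate_value_Icc' hab
      (G17_smooth.continuous.continuousOn) hmem
    exact ⟨σ, hσ, fun z hz => G17_strictAnti.injective (hz.trans hσ.symm)⟩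
  · intro r _ σ hσ
    rw [← G17_zero, ← hσ]
    exact ⟨(StrictAnti.lt_iff_gt G17_strictAnti).symm, ⟨fun h => by rw [h], fun h => G17_strictAnti.injective h⟩,
      (StrictAnti.lt_iff_gt G17_strictAnti).symm⟩
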